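/- Let p be a prime and A an abelian group admitting a uniform bound M with |A/nA| ≤ M for all n coprime to p. Write A ≅ F ⊕ D with F finite of order coprime to p and D p'-divisible. Then F may be chosen so that |F| ≤ M, and for every n coprime to p divisible by the exponent of F one has A/nA ≅ F. -/

import Mathlib

/-!
Among the `n` coprime to `p`, choose `n₀` with `|A/n₀A|` maximal and put `D = n₀A`. For `n`
coprime to `p` we have `nn₀A ≤ n₀A`, and maximality forces equality, so `nD = D`. The finite
quotient `A/D` is killed by `n₀`. Writing it as a direct sum of cyclic groups and lifting each
generator of order `m ∣ n₀` to an element of `A` killed by `m` (possible since `mD = D`) gives a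
section of `A → A/D`; its image is a complement `F ≅ A/D`. If the exponent of `F` divides `n`,
then `nA = nD = D`, so `A/nA = A/D ≅ F`.
-/

/-- The additive homomorphism `a ↦ n • a` on an abelian group. -/
def nMul (A : Type*) [AddCommGroup A] (n : ℕ) : A →+ A :=
  AddMonoidHom.mk' (fun a => n • a) (fun a b => smul_add n a b)

/-- The subgroup of elements of finite order coprime to `p` ("p'-torsion"). -/
def pPrimeTorsion (A : Type*) [AddCommGroup A] (p : ℕ) : AddSubgroup A where
  carrier := {a : A | ∃ n : ℕ, 0 < n ∧ Nat.Coprime n p ∧ n • a = 0}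
  zero_mem' := ⟨1, Nat.one_pos, Nat.coprime_one_left p, smul_zero 1⟩
  add_mem' := by
    rintro a b ⟨n, hn, hcn, ha⟩ ⟨m, hm, hcm, hb⟩
    refine ⟨n * m, Nat.mul_pos hn hm, Nat.Coprime.mul hcn hcm, ?_⟩
    have h1 : (n * m) • a = 0 := by rw [mul_comm, mul_smul, ha, smul_zero]
    have h2 : (n * m) • b = 0 := by rw [mul_smul, hb, smul_zero]
    rw [smul_add, h1, h2, add_zero]
  neg_mem' := by
    rintro a ⟨n, hn, hcn, ha⟩
    exact ⟨n, hn, hcn, by rw [smul_neg, ha, neg_zero]⟩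

open QuotientAddGroup
open scoped DirectSum

section

variable {A : Type*} [AddCommGroup A]

noncomputable def AddSubgroup.quotientAddEquivOfIsCompl {F D : AddSubgroup A} (h : IsCompl F D) :
    (A ⧸ D) ≃+ F :=
  (Submodule.quotientEquivOfIsCompl D.toIntSubmodule F.toIntSubmodule
    (AddSubgroup.toIntSubmodule.isCompl_iff.mp h.symm)).toAddEquiv

lemma AddSubgroup.isCompl_range_of_mk_comp_eq_id {D : AddSubgroup A} (s : A ⧸ D →+ A)
    (hs : (mk' D).comp s = AddMonoidHom.id _) : IsCompl s.range D := by
  have hs' (x : A ⧸ D) : (s x : A ⧸ D) = x := DFunLike.congr_fun hs x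
  constructor
  · rw [AddSubgroup.disjoint_def]
    rintro _ ⟨x, rfl⟩ hx
    rw [← hs' x, (eq_zero_iff _).mpr hx, map_zero]
  · rw [codisjoint_iff_le_sup]
    intro a _
    refine AddSubgroup.mem_sup.mpr ⟨s a, ⟨a, rfl⟩, a - s a, ?_, add_sub_cancel _ _⟩
    rw [← eq_zero_iff, mk_sub, hs', sub_self]

lemma AddMonoidHom.exists_comp_eq_id_of_finite {B : Type*} [AddCommGroup B] [Finite B]
    (π : A →+ B) (hlift : ∀ x : B, ∃ a : A, π a = x ∧ addOrderOf x • a = 0) :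
    ∃ s : B →+ A, π.comp s = AddMonoidHom.id B := by
  classical
  obtain ⟨ι, _, m, -, ⟨Q⟩⟩ := AddCommGroup.equiv_directSum_zmod_of_finite' B
  let g (i : ι) : B := Q.symm (DirectSum.of (fun i => ZMod (m i)) i 1)
  have hg (i : ι) : addOrderOf (g i) = m i := by
    rw [Q.symm.addOrderOf_eq, addOrderOf_injective _ (DirectSum.of_injective i), ZMod.addOrderOf_one]
  choose f hπf hf using fun i => hlift (g i)
  let t : (⨁ i, ZMod (m i)) →+ A := DirectSum.toAddMonoid fun i =>
    ZMod.lift (m i) ⟨zmultiplesHom A (f i), by simpa [hg] using hf i⟩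
  have hπt : π.comp t = Q.symm.toAddMonoidHom := by
    refine DirectSum.addHom_ext fun i y => ?_
    obtain ⟨k, rfl⟩ := ZMod.intCast_surjective y
    simp only [t, AddMonoidHom.comp_apply, DirectSum.toAddMonoid_of, ZMod.lift_coe, zmultiplesHom_apply,
      map_zsmul, hπf, g, AddEquiv.toAddMonoidHom_eq_coe, AddMonoidHom.coe_coe]
    rw [← map_zsmul, ← map_zsmul, zsmul_one]
  refine ⟨t.comp Q.toAddMonoidHom, ?_⟩
  ext x
  simp [← AddMonoidHom.comp_apply π t, hπt]

lemma exists_mk_eq_and_nsmul_eq_zero {D : AddSubgroup A} {m : ℕ}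
    (hD : ∀ d ∈ D, ∃ e ∈ D, m • e = d) {x : A ⧸ D} (hx : m • x = 0) :
    ∃ a : A, (a : A ⧸ D) = x ∧ m • a = 0 := by
  obtain ⟨a, rfl⟩ := mk_surjective x
  obtain ⟨e, he, hme⟩ := hD (m • a) ((eq_zero_iff _).mp (by rwa [mk_nsmul]))
  refine ⟨a - e, ?_, by rw [smul_sub, hme, sub_self]⟩
  rw [mk_sub, (eq_zero_iff e).mpr he, sub_zero]

lemma AddSubgroup.divisible_of_dvd {D : AddSubgroup A} {m n : ℕ} (hmn : m ∣ n)
    (hD : ∀ d ∈ D, ∃ e ∈ D, n • e = d) : ∀ d ∈ D, ∃ e ∈ D, m • e = d := by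
  obtain ⟨k, rfl⟩ := hmn
  intro d hd
  obtain ⟨e, he, rfl⟩ := hD d hd
  exact ⟨k • e, D.nsmul_mem he k, (mul_smul m k e).symm⟩

lemma AddSubgroup.exists_isCompl_of_divisible {D : AddSubgroup A} [Finite (A ⧸ D)] {n : ℕ}
    (hn : ∀ x : A ⧸ D, n • x = 0) (hD : ∀ d ∈ D, ∃ e ∈ D, n • e = d) :
    ∃ F : AddSubgroup A, IsCompl F D := by
  obtain ⟨s, hs⟩ := (mk' D).exists_comp_eq_id_of_finite fun x =>
    exists_mk_eq_and_nsmul_eq_zero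
      (divisible_of_dvd (addOrderOf_dvd_of_nsmul_eq_zero (hn x)) hD) (addOrderOf_nsmul_eq_zero x)
  exact ⟨s.range, isCompl_range_of_mk_comp_eq_id s hs⟩

lemma AddSubgroup.nsmul_mem_of_isCompl {F D : AddSubgroup A} (h : IsCompl F D) {n : ℕ}
    (hF : ∀ f ∈ F, n • f = 0) (a : A) : n • a ∈ D := by
  obtain ⟨f, hf, d, hd, rfl⟩ := mem_sup.mp (h.sup_eq_top ▸ mem_top a)
  rw [smul_add, hF f hf, zero_add]
  exact D.nsmul_mem hd n

lemma nMul_apply (n : ℕ) (a : A) : nMul A n a = n • a := rfl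

lemma range_nMul_mul_le (m n : ℕ) : (nMul A (m * n)).range ≤ (nMul A n).range := by
  rintro _ ⟨a, rfl⟩
  exact ⟨m • a, by rw [nMul_apply, nMul_apply, ← mul_smul, mul_comm]⟩

lemma nsmul_quotient_range_nMul_eq_zero (n : ℕ) (x : A ⧸ (nMul A n).range) : n • x = 0 := by
  obtain ⟨a, rfl⟩ := mk_surjective x
  rw [← mk_nsmul, eq_zero_iff]
  exact ⟨a, rfl⟩

lemma divisible_range_nMul_of_range_nMul_mul_eq {m n : ℕ}
    (h : (nMul A (m * n)).range = (nMul A n).range) :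
    ∀ d ∈ (nMul A n).range, ∃ e ∈ (nMul A n).range, m • e = d := by
  rintro _ hd
  obtain ⟨a, rfl⟩ := h ▸ hd
  exact ⟨n • a, ⟨a, rfl⟩, by rw [nMul_apply, mul_smul]⟩

lemma exists_range_nMul_mul_eq {p M : ℕ}
    (hbd : ∀ n : ℕ, 0 < n → Nat.Coprime n p →
      Finite (A ⧸ (nMul A n).range) ∧ Nat.card (A ⧸ (nMul A n).range) ≤ M) :
    ∃ n₀, 0 < n₀ ∧ n₀.Coprime p ∧
      ∀ n, 0 < n → n.Coprime p → (nMul A (n * n₀)).range = (nMul A n₀).range := by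
  set S := {k | ∃ n, 0 < n ∧ n.Coprime p ∧ Nat.card (A ⧸ (nMul A n).range) = k}
  have hS : BddAbove S := ⟨M, by rintro _ ⟨n, hn, hnp, rfl⟩; exact (hbd n hn hnp).2⟩
  have hSne : S.Nonempty := ⟨_, 1, one_pos, Nat.coprime_one_left p, rfl⟩
  obtain ⟨n₀, hn₀, hn₀p, hmax⟩ := Nat.sSup_mem hSne hS
  refine ⟨n₀, hn₀, hn₀p, fun n hn hnp => ?_⟩
  have hpos := Nat.mul_pos hn hn₀
  have hcop := hnp.mul_left hn₀p
  have := (hbd _ hpos hcop).1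
  have := AddSubgroup.finiteIndex_of_finite_quotient (H := (nMul A (n * n₀)).range)
  refine (range_nMul_mul_le n n₀).eq_of_not_lt fun hlt =>
    (AddSubgroup.index_strictAnti hlt).not_ge ?_
  rw [AddSubgroup.index_eq_card, AddSubgroup.index_eq_card, hmax]
  exact le_csSup hS ⟨_, hpos, hcop, rfl⟩

end

theorem stmt19_general (p M : ℕ) (A : Type*) [AddCommGroup A]
    (hbd : ∀ n : ℕ, 0 < n → Nat.Coprime n p →
      Finite (A ⧸ (nMul A n).range) ∧ Nat.card (A ⧸ (nMul A n).range) ≤ M) :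
    ∃ F D : AddSubgroup A, IsCompl F D ∧ Finite F ∧ (Nat.card F).Coprime p ∧
      Nat.card F ≤ M ∧
      (∀ n : ℕ, 0 < n → Nat.Coprime n p → ∀ d ∈ D, ∃ e ∈ D, n • e = d) ∧
      ∀ n : ℕ, 0 < n → Nat.Coprime n p → AddMonoid.exponent F ∣ n →
        Nonempty ((A ⧸ (nMul A n).range) ≃+ F) := by
  obtain ⟨n₀, hn₀, hn₀p, hstable⟩ := exists_range_nMul_mul_eq hbd
  set D := (nMul A n₀).range
  obtain ⟨_, hcard⟩ := hbd n₀ hn₀ hn₀p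
  have hdiv n (hn : 0 < n) (hnp : n.Coprime p) : ∀ d ∈ D, ∃ e ∈ D, n • e = d :=
    divisible_range_nMul_of_range_nMul_mul_eq (hstable n hn hnp)
  obtain ⟨F, hFD⟩ := AddSubgroup.exists_isCompl_of_divisible (nsmul_quotient_range_nMul_eq_zero n₀)
    (hdiv n₀ hn₀ hn₀p)
  let e := AddSubgroup.quotientAddEquivOfIsCompl hFD
  have hFfin := Finite.of_equiv _ e.toEquiv
  have hF (f : F) : n₀ • f = 0 := Subtype.ext <|
    AddSubgroup.disjoint_def.mp hFD.disjoint (F.nsmul_mem f.2 n₀) ⟨f, rfl⟩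
  refine ⟨F, D, hFD, hFfin, ?_, Nat.card_congr e.toEquiv ▸ hcard, hdiv, fun n hn hnp hexp => ?_⟩
  · exact (hn₀p.pow_left _).coprime_dvd_left (card_dvd_exponent_nsmul_rank' F hF)
  · have hnF (f) (hf : f ∈ F) : n • f = 0 := congrArg Subtype.val
      (AddMonoid.exponent_dvd_iff_forall_nsmul_eq_zero.mp hexp ⟨f, hf⟩)
    have hrange : (nMul A n).range = D := le_antisymm
      (by rintro _ ⟨a, rfl⟩; exact AddSubgroup.nsmul_mem_of_isCompl hFD hnF a)
      (by rw [← hstable n hn hnp, mul_comm]; exact range_nMul_mul_le n₀ n)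
    exact ⟨(quotientAddEquivOfEq hrange).trans e⟩

/-- If `|A/nA| ≤ M` uniformly for `n` coprime to `p`, then in a decomposition
`A = F ⊕ D` with `F` finite of order coprime to `p` and `D` p'-divisible, `F` may be
chosen with `|F| ≤ M`, and `A/nA ≅ F` whenever the exponent of `F` divides `n`
(with `n` coprime to `p`). -/
theorem stmt19 (p M : ℕ) (hp : p.Prime) (A : Type*) [AddCommGroup A]
    (hbd : ∀ n : ℕ, 0 < n → Nat.Coprime n p →
      Finite (A ⧸ (nMul A n).range) ∧ Nat.card (A ⧸ (nMul A n).range) ≤ M) :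
    ∃ F D : AddSubgroup A, IsCompl F D ∧ Finite F ∧ (Nat.card F).Coprime p ∧
      Nat.card F ≤ M ∧
      (∀ n : ℕ, 0 < n → Nat.Coprime n p → ∀ d ∈ D, ∃ e ∈ D, n • e = d) ∧
      ∀ n : ℕ, 0 < n → Nat.Coprime n p → AddMonoid.exponent F ∣ n →
        Nonempty ((A ⧸ (nMul A n).range) ≃+ F) :=
  stmt19_general p M A hbd
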